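/- arXiv:2406.18799 — 3 statements merged into one kernel-verified Lean document; each statement's English description precedes it below -/
import Mathlib

section
/- Let G be a nonzero real number and let B_G be the monopole field on ℝ³ \ {0}, defined by B_G(x) = G • x / ‖x‖³. Then there is no continuously differentiable vector field A : ℝ³ \ {0} → ℝ³ whose curl equals B_G at every point of ℝ³ \ {0}; i.e., the monopole field admits no global smooth vector potential on the punctured space. -/
noncomputable section

/-- The `i`-th partial derivative (Fréchet derivative applied to the `i`-th standard basis
vector) of the `j`-th component of a vector field on `ℝ³`. -/
def pderiv3 (A : EuclideanSpace ℝ (Fin 3) → EuclideanSpace ℝ (Fin 3))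
    (i j : Fin 3) (x : EuclideanSpace ℝ (Fin 3)) : ℝ :=
  fderiv ℝ (fun y => A y j) x (EuclideanSpace.single i 1)

/-- The curl `(∂₂A₃ − ∂₃A₂, ∂₃A₁ − ∂₁A₃, ∂₁A₂ − ∂₂A₁)` of a vector field on `ℝ³`. -/
def curl (A : EuclideanSpace ℝ (Fin 3) → EuclideanSpace ℝ (Fin 3))
    (x : EuclideanSpace ℝ (Fin 3)) : EuclideanSpace ℝ (Fin 3) :=
  (WithLp.equiv 2 (Fin 3 → ℝ)).symm
    ![pderiv3 A 1 2 x - pderiv3 A 2 1 x,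
      pderiv3 A 2 0 x - pderiv3 A 0 2 x,
      pderiv3 A 0 1 x - pderiv3 A 1 0 x]

/-- The monopole field `B_G(x) = G • x / ‖x‖³`. -/
def monopoleField (G : ℝ) (x : EuclideanSpace ℝ (Fin 3)) : EuclideanSpace ℝ (Fin 3) :=
  (‖x‖ ^ 3)⁻¹ • (G • x)

/-!
Suppose `curl A = B_G` on `ℝ³ \ {0}`. Pull the 1-form `A · dx` back along spherical coordinates
`φ(t, s)` on the rectangle `[0, π] × [0, 2π]`, giving `Q dt + P ds` with `P = ⟪A ∘ φ, ∂ₛφ⟫` and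
`Q = ⟪A ∘ φ, ∂ₜφ⟫`. The mixed second derivatives of `φ` cancel in `∂ₜP - ∂ₛQ`, which is therefore
`⟪curl A ∘ φ, ∂ₜφ × ∂ₛφ⟫ = ⟪B_G ∘ φ, sin t • φ⟫ = G sin t`; its integral over the rectangle is the
flux `4πG` of `B_G` through the unit sphere. By Green's theorem the same integral is a boundary
term, and it vanishes: `P = 0` on the edges `t = 0, π`, where `∂ₛφ = 0`, and `Q` is `2π`-periodic
in `s`. Hence `G = 0`.
-/

open Real MeasureTheory Set
open scoped RealInnerProductSpace Matrix Interval

local notation "ℝ³" => EuclideanSpace ℝ (Fin 3)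
local notation "𝐞" i:max => EuclideanSpace.single (i : Fin 3) (1 : ℝ)

theorem pderiv3_eq_fderiv_apply {A : ℝ³ → ℝ³} {x : ℝ³} (hA : DifferentiableAt ℝ A x)
    (i j : Fin 3) : pderiv3 A i j x = fderiv ℝ A x (𝐞 i) j := by
  have h : HasFDerivAt (fun y => A y j)
      ((EuclideanSpace.proj j : ℝ³ →L[ℝ] ℝ).comp (fderiv ℝ A x)) x :=
    (EuclideanSpace.proj j : ℝ³ →L[ℝ] ℝ).hasFDerivAt.comp x hA.hasFDerivAt
  rw [pderiv3, h.fderiv]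
  rfl

theorem inner_fderiv_apply_sub_inner_fderiv_apply {A : ℝ³ → ℝ³} {x : ℝ³}
    (hA : DifferentiableAt ℝ A x) (u v : ℝ³) :
    ⟪fderiv ℝ A x u, v⟫ - ⟪fderiv ℝ A x v, u⟫
      = ⟪curl A x, WithLp.toLp 2 (u.ofLp ⨯₃ v.ofLp)⟫ := by
  set L := fderiv ℝ A x
  have expand : ∀ w : ℝ³, L w = w 0 • L (𝐞 0) + w 1 • L (𝐞 1) + w 2 • L (𝐞 2) := by
    intro w
    rw [← map_smul, ← map_smul, ← map_smul, ← map_add, ← map_add]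
    congr 1
    ext i; fin_cases i <;> simp
  rw [expand u, expand v]
  simp only [curl, pderiv3_eq_fderiv_apply hA, cross_apply, PiLp.inner_apply, RCLike.inner_apply,
    conj_trivial, Fin.sum_univ_three, PiLp.add_apply, PiLp.smul_apply, smul_eq_mul,
    WithLp.equiv_symm_apply, Matrix.cons_val_zero, Matrix.cons_val_one,
    Matrix.cons_val_two, Matrix.head_cons, Matrix.tail_cons]
  ring

/-- Spherical coordinates with polar angle `t` and azimuth `s`. -/
def sph (t s : ℝ) : ℝ³ := (sin t * cos s) • 𝐞 0 + (sin t * sin s) • 𝐞 1 + cos t • 𝐞 2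
def sphDt (t s : ℝ) : ℝ³ := (cos t * cos s) • 𝐞 0 + (cos t * sin s) • 𝐞 1 + (-sin t) • 𝐞 2
def sphDs (t s : ℝ) : ℝ³ := (sin t * -sin s) • 𝐞 0 + (sin t * cos s) • 𝐞 1
def sphDtDs (t s : ℝ) : ℝ³ := (cos t * -sin s) • 𝐞 0 + (cos t * cos s) • 𝐞 1

theorem hasDerivAt_sph_fst (t s : ℝ) : HasDerivAt (fun t' => sph t' s) (sphDt t s) t :=
  ((((hasDerivAt_sin t).mul_const _).smul_const _).add
    (((hasDerivAt_sin t).mul_const _).smul_const _)).add ((hasDerivAt_cos t).smul_const _)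

theorem hasDerivAt_sph_snd (t s : ℝ) : HasDerivAt (fun s' => sph t s') (sphDs t s) s :=
  ((((hasDerivAt_cos s).const_mul _).smul_const _).add
    (((hasDerivAt_sin s).const_mul _).smul_const _)).add_const _

theorem hasDerivAt_sphDs_fst (t s : ℝ) : HasDerivAt (fun t' => sphDs t' s) (sphDtDs t s) t :=
  (((hasDerivAt_sin t).mul_const _).smul_const _).add
    (((hasDerivAt_sin t).mul_const _).smul_const _)

theorem hasDerivAt_sphDt_snd (t s : ℝ) : HasDerivAt (fun s' => sphDt t s') (sphDtDs t s) s :=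
  ((((hasDerivAt_cos s).const_mul _).smul_const _).add
    (((hasDerivAt_sin s).const_mul _).smul_const _)).add_const _

theorem norm_sph (t s : ℝ) : ‖sph t s‖ = 1 := by
  rw [EuclideanSpace.norm_eq, Fin.sum_univ_three, Real.sqrt_eq_one]
  simp only [Fin.isValue, sph, PiLp.add_apply, PiLp.smul_apply, PiLp.single_eq_same, smul_eq_mul,
    mul_one, ne_eq, zero_ne_one, not_false_eq_true, PiLp.single_eq_of_ne, mul_zero, add_zero,
    Fin.reduceEq, norm_eq_abs, one_ne_zero, zero_add, sq_abs]
  linear_combination sin t ^ 2 * sin_sq_add_cos_sq s + sin_sq_add_cos_sq t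

theorem sph_ne_zero (t s : ℝ) : sph t s ≠ 0 :=
  norm_ne_zero_iff.mp (by rw [norm_sph]; exact one_ne_zero)

theorem cross_sphDt_sphDs (t s : ℝ) :
    WithLp.toLp 2 ((sphDt t s).ofLp ⨯₃ (sphDs t s).ofLp) = sin t • sph t s := by
  ext i
  fin_cases i <;> simp [sphDt, sphDs, sph, cross_apply]
  linear_combination sin t * cos t * sin_sq_add_cos_sq s

theorem monopoleField_of_norm_eq_one {x : ℝ³} (hx : ‖x‖ = 1) (G : ℝ) :
    monopoleField G x = G • x := by
  simp [monopoleField, hx]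

theorem hasDerivAt_comp_prodMk_left {F : Type*} [NormedAddCommGroup F] [NormedSpace ℝ F]
    {f : ℝ × ℝ → F} {t s : ℝ} (hf : DifferentiableAt ℝ f (t, s)) :
    HasDerivAt (fun t' => f (t', s)) (fderiv ℝ f (t, s) (1, 0)) t :=
  hf.hasFDerivAt.comp_hasDerivAt t ((hasDerivAt_id t).prodMk (hasDerivAt_const t s))

theorem hasDerivAt_comp_prodMk_right {F : Type*} [NormedAddCommGroup F] [NormedSpace ℝ F]
    {f : ℝ × ℝ → F} {t s : ℝ} (hf : DifferentiableAt ℝ f (t, s)) :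
    HasDerivAt (fun s' => f (t, s')) (fderiv ℝ f (t, s) (0, 1)) s :=
  hf.hasFDerivAt.comp_hasDerivAt s ((hasDerivAt_const s t).prodMk (hasDerivAt_id s))

theorem integral_integral_fderiv_sub_fderiv_eq_zero {P Q : ℝ × ℝ → ℝ} {a₁ b₁ a₂ b₂ : ℝ}
    (hP : Differentiable ℝ P) (hQ : Differentiable ℝ Q)
    (hi : IntegrableOn (fun z => fderiv ℝ P z (1, 0) - fderiv ℝ Q z (0, 1))
      ([[a₁, b₁]] ×ˢ [[a₂, b₂]]))
    (hPa : ∀ s, P (a₁, s) = 0) (hPb : ∀ s, P (b₁, s) = 0) (hQab : ∀ t, Q (t, b₂) = Q (t, a₂)) :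
    ∫ t in a₁..b₁, ∫ s in a₂..b₂, fderiv ℝ P (t, s) (1, 0) - fderiv ℝ Q (t, s) (0, 1) = 0 := by
  have green := integral2_divergence_prod_of_hasFDerivAt P (-Q) (fderiv ℝ P) (-fderiv ℝ Q)
    a₁ a₂ b₁ b₂ hP.continuous.continuousOn hQ.continuous.neg.continuousOn
    (fun z _ => (hP z).hasFDerivAt) (fun z _ => (hQ z).hasFDerivAt.neg)
    (by simpa only [Pi.neg_apply, neg_apply, ← sub_eq_add_neg] using hi)
  simpa only [neg_apply, ← sub_eq_add_neg, Pi.neg_apply, hPa, hPb, hQab,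
    sub_self, intervalIntegral.integral_zero, add_zero] using green

/-- `pullbackDt A dt + pullbackDs A ds` is the pullback of the 1-form `A · dx` along `sph`. -/
def pullbackDt (A : ℝ³ → ℝ³) (z : ℝ × ℝ) : ℝ := ⟪A (sph z.1 z.2), sphDt z.1 z.2⟫
def pullbackDs (A : ℝ³ → ℝ³) (z : ℝ × ℝ) : ℝ := ⟪A (sph z.1 z.2), sphDs z.1 z.2⟫

theorem pullbackDs_zero (A : ℝ³ → ℝ³) (s : ℝ) : pullbackDs A (0, s) = 0 := by
  simp [pullbackDs, sphDs]

theorem pullbackDs_pi (A : ℝ³ → ℝ³) (s : ℝ) : pullbackDs A (π, s) = 0 := by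
  simp [pullbackDs, sphDs]

theorem pullbackDt_two_pi (A : ℝ³ → ℝ³) (t : ℝ) :
    pullbackDt A (t, 2 * π) = pullbackDt A (t, 0) := by
  simp [pullbackDt, sph, sphDt]

section

variable {A : ℝ³ → ℝ³}

theorem differentiable_pullbackDt (hA : ∀ x ≠ 0, DifferentiableAt ℝ A x) :
    Differentiable ℝ (pullbackDt A) := fun z =>
  ((hA _ (sph_ne_zero z.1 z.2)).comp z (by unfold sph; fun_prop)).inner ℝ
    (by unfold sphDt; fun_prop)

theorem differentiable_pullbackDs (hA : ∀ x ≠ 0, DifferentiableAt ℝ A x) :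
    Differentiable ℝ (pullbackDs A) := fun z =>
  ((hA _ (sph_ne_zero z.1 z.2)).comp z (by unfold sph; fun_prop)).inner ℝ
    (by unfold sphDs; fun_prop)

theorem fderiv_pullbackDs_sub_fderiv_pullbackDt (hA : ∀ x ≠ 0, DifferentiableAt ℝ A x)
    (t s : ℝ) :
    fderiv ℝ (pullbackDs A) (t, s) (1, 0) - fderiv ℝ (pullbackDt A) (t, s) (0, 1)
      = sin t * ⟪curl A (sph t s), sph t s⟫ := by
  have hAx := hA _ (sph_ne_zero t s)
  have hDs : HasDerivAt (fun t' => pullbackDs A (t', s))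
      (⟪A (sph t s), sphDtDs t s⟫ + ⟪fderiv ℝ A (sph t s) (sphDt t s), sphDs t s⟫) t :=
    (hAx.hasFDerivAt.comp_hasDerivAt t (hasDerivAt_sph_fst t s)).inner ℝ
      (hasDerivAt_sphDs_fst t s)
  have hDt : HasDerivAt (fun s' => pullbackDt A (t, s'))
      (⟪A (sph t s), sphDtDs t s⟫ + ⟪fderiv ℝ A (sph t s) (sphDs t s), sphDt t s⟫) s :=
    (hAx.hasFDerivAt.comp_hasDerivAt s (hasDerivAt_sph_snd t s)).inner ℝ
      (hasDerivAt_sphDt_snd t s)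
  rw [(hasDerivAt_comp_prodMk_left (differentiable_pullbackDs hA _)).unique hDs,
    (hasDerivAt_comp_prodMk_right (differentiable_pullbackDt hA _)).unique hDt,
    add_sub_add_left_eq_sub, inner_fderiv_apply_sub_inner_fderiv_apply hAx, cross_sphDt_sphDs,
    inner_smul_right]

end

/-- For `G ≠ 0`, the monopole field admits no global `C¹` vector potential on `ℝ³ \ {0}`. -/
theorem monopole_has_no_global_potential (G : ℝ) (hG : G ≠ 0) :
    ¬ ∃ A : EuclideanSpace ℝ (Fin 3) → EuclideanSpace ℝ (Fin 3),
        ContDiffOn ℝ 1 A ({0}ᶜ : Set (EuclideanSpace ℝ (Fin 3))) ∧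
        ∀ x : EuclideanSpace ℝ (Fin 3), x ≠ 0 → curl A x = monopoleField G x := by
  rintro ⟨A, hA, hcurl⟩
  have hAd : ∀ x ≠ 0, DifferentiableAt ℝ A x := fun x hx =>
    (hA.differentiableOn one_ne_zero).differentiableAt (isOpen_compl_singleton.mem_nhds hx)
  have hflux : ∀ z : ℝ × ℝ,
      fderiv ℝ (pullbackDs A) z (1, 0) - fderiv ℝ (pullbackDt A) z (0, 1) = G * sin z.1 := by
    rintro ⟨t, s⟩
    rw [fderiv_pullbackDs_sub_fderiv_pullbackDt hAd, hcurl _ (sph_ne_zero t s),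
      monopoleField_of_norm_eq_one (norm_sph t s), real_inner_smul_left,
      real_inner_self_eq_norm_sq, norm_sph]
    ring
  have hzero := integral_integral_fderiv_sub_fderiv_eq_zero (a₁ := 0) (b₁ := π) (a₂ := 0)
    (b₂ := 2 * π) (differentiable_pullbackDs hAd) (differentiable_pullbackDt hAd)
    (by simp_rw [hflux]; exact (continuous_const.mul (continuous_sin.comp continuous_fst))
      |>.continuousOn.integrableOn_compact (isCompact_uIcc.prod isCompact_uIcc))
    (pullbackDs_zero A) (pullbackDs_pi A) (pullbackDt_two_pi A)
  simp only [hflux, intervalIntegral.integral_const, intervalIntegral.integral_const_mul,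
    integral_sin, cos_zero, cos_pi, smul_eq_mul] at hzero
  have : 4 * π * G = 0 := by linear_combination hzero
  simp [pi_ne_zero, hG] at this
end
end

section
/- The punctured three-dimensional Euclidean space ℝ³ \ {0} is simply connected: the subspace {0}ᶜ of EuclideanSpace ℝ (Fin 3) is a simply connected topological space (it is path-connected and every loop in it is null-homotopic). -/
open Set unitInterval

noncomputable section

namespace PuncturedAux

variable {E : Type*} [NormedAddCommGroup E] [NormedSpace ℝ E]
variable {X : Type*} [TopologicalSpace X]

lemma combo_close {ε : ℝ} {c w z u : E} (hw : ‖w - c‖ ≤ ε / 2) (hz : ‖z - c‖ ≤ ε / 2)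
    (hu : u ∈ segment ℝ w z) : ‖u - c‖ ≤ ε / 2 := by
  obtain ⟨a, b, ha, hb, hab, rfl⟩ := hu
  have h1 : a • w + b • z - c = a • (w - c) + b • (z - c) := by
    match_scalars <;> linarith [hab]
  rw [h1]
  calc ‖a • (w - c) + b • (z - c)‖ ≤ a * ‖w - c‖ + b * ‖z - c‖ := by
        refine (norm_add_le _ _).trans ?_
        rw [norm_smul, norm_smul, Real.norm_of_nonneg ha, Real.norm_of_nonneg hb]
    _ ≤ ε / 2 := by
        have hsum : a * (ε / 2) + b * (ε / 2) = ε / 2 := by rw [← add_mul, hab, one_mul]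
        linarith [mul_le_mul_of_nonneg_left hw ha, mul_le_mul_of_nonneg_left hz hb]

lemma mem_compl_of_close {ε : ℝ} (hε0 : 0 < ε) {c u : E} (hc : ε ≤ ‖c‖)
    (h : ‖u - c‖ ≤ ε / 2) : u ∈ ({0}ᶜ : Set E) := by
  simp only [mem_compl_iff, mem_singleton_iff]
  rintro rfl
  rw [zero_sub, norm_neg] at h
  linarith

/-- Restriction of a path to a subinterval, affinely reparametrized. -/
def restr {x y : X} (γ : Path x y) (a b : I) (hab : a ≤ b) : Path (γ a) (γ b) where
  toFun t := γ ⟨(a : ℝ) + t * ((b : ℝ) - a), by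
    have h1 := t.2.1; have h2 := t.2.2
    have hba : (0:ℝ) ≤ (b:ℝ) - a := by
      have : (a:ℝ) ≤ b := hab
      linarith
    constructor
    · nlinarith [a.2.1]
    · nlinarith [b.2.2]⟩
  continuous_toFun := by
    apply γ.continuous.comp
    apply Continuous.subtype_mk
    fun_prop
  source' := by
    show γ _ = γ a
    congr 1; apply Subtype.ext; simp
  target' := by
    show γ _ = γ b
    congr 1; apply Subtype.ext; simp

lemma restr_split {x y : X} (γ : Path x y) (a b m : I) (h1 : a ≤ m) (h2 : m ≤ b)
    (hm : (m : ℝ) = ((a : ℝ) + b) / 2) (hab : a ≤ b) :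
    restr γ a b hab = (restr γ a m h1).trans (restr γ m b h2) := by
  ext t
  rw [Path.trans_apply]
  split_ifs with h
  · show γ _ = γ _
    congr 1
    apply Subtype.ext
    show (a : ℝ) + t * ((b : ℝ) - a) = (a : ℝ) + (2 * t) * ((m : ℝ) - a)
    rw [hm]; ring
  · show γ _ = γ _
    congr 1
    apply Subtype.ext
    show (a : ℝ) + t * ((b : ℝ) - a) = (m : ℝ) + (2 * t - 1) * ((b : ℝ) - m)
    rw [hm]; ring

/-- Transport a path homotopy along equalities of underlying functions. -/
lemma homotopic_congr {x y x' y' : X} {γ₁ γ₂ : Path x y} {p₁ p₂ : Path x' y'}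
    (h1 : (γ₁ : I → X) = p₁) (h2 : (γ₂ : I → X) = p₂) (h : p₁.Homotopic p₂) :
    γ₁.Homotopic γ₂ := by
  obtain ⟨H⟩ := h
  refine ⟨{ toContinuousMap := H.toContinuousMap
            map_zero_left := ?_
            map_one_left := ?_
            prop' := ?_ }⟩
  · intro z
    have := H.map_zero_left z
    simpa [← h1] using this
  · intro z
    have := H.map_one_left z
    simpa [← h2] using this
  · intro t z hz
    have := H.prop' t z hz
    simpa [← h1] using this

/-- Straight-line homotopy inside a subset of a normed space. -/
lemma straight_homotopic {s : Set E} {x y : ↥s} (p q : Path x y)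
    (h : ∀ t : I, ∀ a b : ℝ, 0 ≤ a → 0 ≤ b → a + b = 1 →
      a • (p t : E) + b • (q t : E) ∈ s) : p.Homotopic q := by
  refine ⟨{ toFun := fun st => ⟨(1 - (st.1 : ℝ)) • (p st.2 : E) + (st.1 : ℝ) • (q st.2 : E),
              h st.2 _ _ (by linarith [st.1.2.2]) st.1.2.1 (by ring)⟩
            continuous_toFun := ?_
            map_zero_left := ?_
            map_one_left := ?_
            prop' := ?_ }⟩
  · apply Continuous.subtype_mk
    have hp : Continuous fun st : I × I => (p st.2 : E) :=
      continuous_subtype_val.comp (p.continuous.comp continuous_snd)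
    have hq : Continuous fun st : I × I => (q st.2 : E) :=
      continuous_subtype_val.comp (q.continuous.comp continuous_snd)
    have ht : Continuous fun st : I × I => (st.1 : ℝ) :=
      continuous_subtype_val.comp continuous_fst
    exact ((continuous_const.sub ht).smul hp).add (ht.smul hq)
  · intro z; apply Subtype.ext; simp
  · intro z; apply Subtype.ext
    show (1 - (1:ℝ)) • (p z : E) + (1:ℝ) • (q z : E) = (q z : E)
    simp
  · intro t z hz
    rcases hz with rfl | hz
    · apply Subtype.ext
      show (1 - (t:ℝ)) • (p 0 : E) + (t:ℝ) • (q 0 : E) = (p 0 : E)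
      have h0 : ((q 0 : ↥s) : E) = (p 0 : E) := by rw [p.source, q.source]
      rw [h0, ← add_smul]
      simp
    · rcases hz with rfl
      apply Subtype.ext
      show (1 - (t:ℝ)) • (p 1 : E) + (t:ℝ) • (q 1 : E) = (p 1 : E)
      have h0 : ((q 1 : ↥s) : E) = (p 1 : E) := by rw [p.target, q.target]
      rw [h0, ← add_smul]
      simp

lemma pl_approx {x y : ↥({0}ᶜ : Set E)} (γ : Path x y) {ε δ : ℝ} (hε0 : 0 < ε) (hδ0 : 0 < δ)
    (hε : ∀ t : I, ε ≤ ‖(γ t : E)‖)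
    (hδ : ∀ u v : I, |(u : ℝ) - v| ≤ δ → ‖(γ u : E) - γ v‖ ≤ ε / 2) :
    ∀ (m : ℕ) (a b : I) (hab : a ≤ b), (b : ℝ) - a ≤ 2 ^ m * δ →
    ∃ (p : Path (γ a) (γ b)) (S : Finset (E × E)),
      (∀ q ∈ S, (0 : E) ∉ segment ℝ q.1 q.2) ∧
      (∀ t : I, ∃ q ∈ S, (p t : E) ∈ segment ℝ q.1 q.2) ∧
      (restr γ a b hab).Homotopic p := by
  classical
  intro m
  induction m with
  | zero =>
    intro a b hab hlen
    rw [pow_zero, one_mul] at hlen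
    have habR : (a : ℝ) ≤ b := hab
    have key : ∀ t : I, (a : ℝ) ≤ t → (t : ℝ) ≤ b → ‖(γ t : E) - γ a‖ ≤ ε / 2 := by
      intro t h1 h2
      exact hδ t a (by rw [abs_of_nonneg (by linarith)]; linarith)
    have hseg : ∀ u ∈ segment ℝ ((γ a : E)) ((γ b : E)), ‖u - (γ a : E)‖ ≤ ε / 2 :=
      fun u hu => combo_close (by simp; linarith) (key b habR le_rfl) hu
    have hsegmem : ∀ u ∈ segment ℝ ((γ a : E)) ((γ b : E)), u ∈ ({0}ᶜ : Set E) :=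
      fun u hu => mem_compl_of_close hε0 (hε a) (hseg u hu)
    have hsegpt : ∀ t : I, (1 - (t:ℝ)) • ((γ a : E)) + (t:ℝ) • ((γ b : E)) ∈
        segment ℝ ((γ a : E)) ((γ b : E)) :=
      fun t => ⟨1 - t, t, by linarith [t.2.2], t.2.1, by ring, rfl⟩
    refine ⟨{ toFun := fun t => ⟨(1 - (t:ℝ)) • ((γ a : E)) + (t:ℝ) • ((γ b : E)),
                hsegmem _ (hsegpt t)⟩
              continuous_toFun := by
                apply Continuous.subtype_mk
                have ht : Continuous fun t : I => (t : ℝ) := continuous_subtype_val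
                exact ((continuous_const.sub ht).smul continuous_const).add
                  (ht.smul continuous_const)
              source' := by apply Subtype.ext; simp
              target' := by
                apply Subtype.ext
                show (1 - (1:ℝ)) • ((γ a : E)) + (1:ℝ) • ((γ b : E)) = (γ b : E)
                simp },
      {((γ a : E), (γ b : E))}, ?_, ?_, ?_⟩
    · intro q hq
      rw [Finset.mem_singleton] at hq
      subst hq
      intro h0
      have := hseg 0 h0
      rw [zero_sub, norm_neg] at this
      linarith [hε a]
    · intro t
      exact ⟨((γ a : E), (γ b : E)), Finset.mem_singleton_self _, hsegpt t⟩
    · apply straight_homotopic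
      intro t a' b' ha' hb' hab'
      apply mem_compl_of_close hε0 (hε a)
      apply combo_close (c := (γ a : E)) ?_ ?_ ⟨a', b', ha', hb', hab', rfl⟩
      · -- restr point close
        show ‖(γ ⟨(a:ℝ) + t * ((b:ℝ) - a), _⟩ : E) - γ a‖ ≤ ε / 2
        apply key
        · show (a:ℝ) ≤ (a:ℝ) + t * ((b:ℝ) - a)
          nlinarith [t.2.1, t.2.2]
        · show (a:ℝ) + t * ((b:ℝ) - a) ≤ (b:ℝ)
          nlinarith [t.2.1, t.2.2]
      · exact hseg _ (hsegpt t)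
  | succ m ih =>
    intro a b hab hlen
    have habR : (a : ℝ) ≤ b := hab
    have hm0 : (0:ℝ) ≤ ((a:ℝ) + b) / 2 := by nlinarith [a.2.1, b.2.1]
    have hm1 : ((a:ℝ) + b) / 2 ≤ 1 := by nlinarith [a.2.2, b.2.2]
    set m' : I := ⟨((a : ℝ) + b) / 2, hm0, hm1⟩ with hm'
    have h1 : a ≤ m' := by show (a:ℝ) ≤ ((a:ℝ) + b) / 2; linarith
    have h2 : m' ≤ b := by show ((a:ℝ) + b) / 2 ≤ (b:ℝ); linarith
    have hpow : (2:ℝ) ^ (m+1) * δ = 2 * (2 ^ m * δ) := by ring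
    have l1 : (m' : ℝ) - a ≤ 2 ^ m * δ := by
      show ((a:ℝ) + b) / 2 - a ≤ _
      rw [hpow] at hlen
      linarith
    have l2 : (b : ℝ) - m' ≤ 2 ^ m * δ := by
      show (b:ℝ) - ((a:ℝ) + b) / 2 ≤ _
      rw [hpow] at hlen
      linarith
    obtain ⟨p₁, S₁, av₁, cov₁, hom₁⟩ := ih a m' h1 l1
    obtain ⟨p₂, S₂, av₂, cov₂, hom₂⟩ := ih m' b h2 l2
    refine ⟨p₁.trans p₂, S₁ ∪ S₂, ?_, ?_, ?_⟩
    · intro q hq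
      rcases Finset.mem_union.1 hq with h | h
      exacts [av₁ q h, av₂ q h]
    · intro t
      rw [Path.trans_apply]
      split_ifs with h
      · obtain ⟨q, hq, hmem⟩ := cov₁ _
        exact ⟨q, Finset.mem_union_left _ hq, hmem⟩
      · obtain ⟨q, hq, hmem⟩ := cov₂ _
        exact ⟨q, Finset.mem_union_right _ hq, hmem⟩
    · rw [restr_split γ a b m' h1 h2 rfl hab]
      exact hom₁.hcomp hom₂


lemma exists_pl {x y : ↥({0}ᶜ : Set E)} (γ : Path x y) :
    ∃ (p : Path x y) (S : Finset (E × E)),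
      (∀ q ∈ S, (0 : E) ∉ segment ℝ q.1 q.2) ∧
      (∀ t : I, ∃ q ∈ S, (p t : E) ∈ segment ℝ q.1 q.2) ∧
      γ.Homotopic p := by
  obtain ⟨t₀, -, ht₀⟩ := isCompact_univ.exists_isMinOn univ_nonempty
      (Continuous.continuousOn (show Continuous fun t : I => ‖(γ t : E)‖ by fun_prop))
  set ε := ‖(γ t₀ : E)‖ with hεdef
  have hε0 : 0 < ε := by
    have h1 : (γ t₀ : E) ≠ 0 := (γ t₀).2
    exact norm_pos_iff.mpr h1
  have hεle : ∀ t : I, ε ≤ ‖(γ t : E)‖ := fun t => ht₀ (mem_univ t)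
  have huc : UniformContinuous fun t : I => (γ t : E) :=
    CompactSpace.uniformContinuous_of_continuous (by fun_prop)
  rw [Metric.uniformContinuous_iff] at huc
  obtain ⟨δ', hδ'0, hδ'⟩ := huc (ε / 2) (by linarith)
  have hδ0 : 0 < δ' / 2 := by linarith
  have hδ : ∀ u v : I, |(u : ℝ) - v| ≤ δ' / 2 → ‖(γ u : E) - γ v‖ ≤ ε / 2 := by
    intro u v h
    have hd : dist u v < δ' := by
      rw [Subtype.dist_eq, Real.dist_eq]; linarith
    have := hδ' hd
    rw [dist_eq_norm] at this
    linarith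
  obtain ⟨m, hm⟩ := pow_unbounded_of_one_lt (1 / (δ' / 2)) one_lt_two
  have h01 : (0 : I) ≤ 1 := unitInterval.le_one'
  have hlen : ((1 : I) : ℝ) - ((0 : I) : ℝ) ≤ 2 ^ m * (δ' / 2) := by
    rw [div_lt_iff₀ hδ0] at hm
    simp only [Icc.coe_one, Icc.coe_zero, sub_zero]
    nlinarith [pow_pos (zero_lt_two (α := ℝ)) m]
  obtain ⟨p, S, hav, hcov, hhom⟩ := pl_approx γ hε0 hδ0 hεle hδ m 0 1 h01 hlen
  refine ⟨p.cast γ.source.symm γ.target.symm, S, hav, ?_, ?_⟩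
  · intro t
    have : ((p.cast γ.source.symm γ.target.symm) t : E) = (p t : E) := by
      rw [Path.cast_coe]
    rw [this]
    exact hcov t
  · refine homotopic_congr ?_ ?_ hhom
    · funext t
      show γ t = restr γ 0 1 h01 t
      show γ t = γ _
      congr 1
      apply Subtype.ext
      simp
    · rw [Path.cast_coe]

end PuncturedAux

open PuncturedAux

/-- The punctured Euclidean space `ℝ³ \ {0}` is simply connected. -/
theorem punctured_R3_simplyConnected :
    SimplyConnectedSpace ({0}ᶜ : Set (EuclideanSpace ℝ (Fin 3))) := by
  classical
  set E := EuclideanSpace ℝ (Fin 3) with hE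
  rw [simply_connected_iff_paths_homotopic']
  constructor
  · have hrank : 1 < Module.rank ℝ E := by
      have h3 : Module.finrank ℝ E = 3 := finrank_euclideanSpace_fin
      rw [← Module.finrank_eq_rank, h3]
      norm_num
    exact isPathConnected_iff_pathConnectedSpace.mp
      (isPathConnected_compl_singleton_of_one_lt_rank hrank 0)
  · intro x y p₁ p₂
    obtain ⟨q₁, S₁, av₁, cov₁, hom₁⟩ := exists_pl p₁
    obtain ⟨q₂, S₂, av₂, cov₂, hom₂⟩ := exists_pl p₂
    have hav : ∀ q ∈ S₁ ∪ S₂, (0 : E) ∉ segment ℝ q.1 q.2 := by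
      intro q hq
      rcases Finset.mem_union.1 hq with h | h
      exacts [av₁ q h, av₂ q h]
    -- choose a direction avoiding all spans
    have hv : ∃ v : E, ∀ q ∈ S₁ ∪ S₂, v ∉ Submodule.span ℝ {q.1, q.2} := by
      by_contra h
      push_neg at h
      have hcl : ∀ q : {q // q ∈ S₁ ∪ S₂},
          IsClosed ((Submodule.span ℝ {q.1.1, q.1.2} : Submodule ℝ E) : Set E) :=
        fun q => Submodule.closed_of_finiteDimensional _
      have hU : ⋃ q : {q // q ∈ S₁ ∪ S₂},
          ((Submodule.span ℝ {q.1.1, q.1.2} : Submodule ℝ E) : Set E) = univ := by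
        apply eq_univ_of_forall
        intro v
        obtain ⟨q, hq, hmem⟩ := h v
        exact mem_iUnion.2 ⟨⟨q, hq⟩, hmem⟩
      obtain ⟨q, hq⟩ := nonempty_interior_of_iUnion_of_closed hcl hU
      have htop := Submodule.eq_top_of_nonempty_interior' _ hq
      have hle : Module.finrank ℝ
          (Submodule.span ℝ ({q.1.1, q.1.2} : Set E)) ≤ 2 := by
        refine (finrank_span_le_card _).trans ?_
        rw [Set.toFinset_insert, Set.toFinset_singleton]
        exact (Finset.card_insert_le _ _).trans (by simp)
      rw [htop, finrank_top, finrank_euclideanSpace_fin] at hle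
      omega
    obtain ⟨v, hv⟩ := hv
    obtain ⟨q₀, hq₀, -⟩ := cov₁ 0
    have hv0 : v ≠ 0 := fun h =>
      hv q₀ (Finset.mem_union_left _ hq₀) (h ▸ Submodule.zero_mem _)
    set T : Set E := {w | ∀ c : ℝ, 0 ≤ c → w ≠ c • v} with hT
    have hTA : T ⊆ ({0}ᶜ : Set E) := by
      intro w hw
      simp only [mem_compl_iff, mem_singleton_iff]
      intro h0
      exact hw 0 le_rfl (by simp [h0])
    have hTv : -v ∈ T := by
      intro c hc h
      apply hv0
      have h1 : (c + 1) • v = 0 := by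
        rw [add_smul, one_smul, ← h]
        abel
      rcases smul_eq_zero.1 h1 with h2 | h2
      · linarith
      · exact h2
    have hstar : StarConvex ℝ (-v) T := by
      intro y0 hy a b ha hb hab
      intro c hc hEq
      rcases hb.lt_or_eq with hb0 | hb0
      · have hb' : b • y0 = (c + a) • v := by
          have h2 : b • y0 = (a • (-v) + b • y0) + a • v := by
            rw [smul_neg]; abel
          rw [h2, hEq, ← add_smul]
        have hyv : y0 = (b⁻¹ * (c + a)) • v := by
          calc y0 = b⁻¹ • (b • y0) := by
                rw [smul_smul, inv_mul_cancel₀ (ne_of_gt hb0), one_smul]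
            _ = b⁻¹ • ((c + a) • v) := by rw [hb']
            _ = (b⁻¹ * (c + a)) • v := by rw [smul_smul]
        exact hy (b⁻¹ * (c + a)) (mul_nonneg (inv_nonneg.2 hb0.le) (by linarith)) hyv
      · have ha1 : a = 1 := by linarith
        rw [← hb0, ha1, one_smul, zero_smul, add_zero] at hEq
        exact hTv c hc hEq
    haveI hcon : ContractibleSpace ↥T := hstar.contractibleSpace ⟨-v, hTv⟩
    have hseg_sub : ∀ q ∈ S₁ ∪ S₂, ∀ w ∈ segment ℝ q.1 q.2, w ∈ T := by
      intro q hq w hw c hc hEq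
      rcases hc.lt_or_eq with hc0 | hc0
      · apply hv q hq
        have hw' : w ∈ (Submodule.span ℝ {q.1, q.2} : Submodule ℝ E) := by
          obtain ⟨a, b, ha, hb, hab, rfl⟩ := hw
          exact Submodule.add_mem _
            (Submodule.smul_mem _ _ (Submodule.subset_span (by simp)))
            (Submodule.smul_mem _ _ (Submodule.subset_span (by simp)))
        have hveq : v = c⁻¹ • w := by
          rw [hEq, smul_smul, inv_mul_cancel₀ (ne_of_gt hc0), one_smul]
        rw [hveq]
        exact Submodule.smul_mem _ _ hw'
      · apply hav q hq
        rw [← hc0, zero_smul] at hEq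
        rwa [← hEq]
    have hm₁ : ∀ t : I, (q₁ t : E) ∈ T := fun t => by
      obtain ⟨q, hq, hs⟩ := cov₁ t
      exact hseg_sub q (Finset.mem_union_left _ hq) _ hs
    have hm₂ : ∀ t : I, (q₂ t : E) ∈ T := fun t => by
      obtain ⟨q, hq, hs⟩ := cov₂ t
      exact hseg_sub q (Finset.mem_union_right _ hq) _ hs
    have hxT : (x : E) ∈ T := by have h := hm₁ 0; rwa [q₁.source] at h
    have hyT : (y : E) ∈ T := by have h := hm₁ 1; rwa [q₁.target] at h
    set f : C(↥T, ↥({0}ᶜ : Set E)) :=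
      ⟨fun z => ⟨z.1, hTA z.2⟩, Continuous.subtype_mk continuous_subtype_val _⟩ with hf
    set q₁' : Path (⟨(x : E), hxT⟩ : ↥T) ⟨(y : E), hyT⟩ :=
      { toFun := fun t => ⟨(q₁ t : E), hm₁ t⟩
        continuous_toFun := (continuous_subtype_val.comp q₁.continuous).subtype_mk _
        source' := Subtype.ext (by simp [q₁.source])
        target' := Subtype.ext (by simp [q₁.target]) } with hq₁'
    set q₂' : Path (⟨(x : E), hxT⟩ : ↥T) ⟨(y : E), hyT⟩ :=
      { toFun := fun t => ⟨(q₂ t : E), hm₂ t⟩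
        continuous_toFun := (continuous_subtype_val.comp q₂.continuous).subtype_mk _
        source' := Subtype.ext (by simp [q₂.source])
        target' := Subtype.ext (by simp [q₂.target]) } with hq₂'
    have hhomT : q₁'.Homotopic q₂' := SimplyConnectedSpace.paths_homotopic q₁' q₂'
    have hfinal : q₁.Homotopic q₂ :=
      homotopic_congr (funext fun t => Subtype.ext rfl) (funext fun t => Subtype.ext rfl)
        (hhomT.map f)
    exact hom₁.trans (hfinal.trans hom₂.symm)

end
end

section
/- The complex projective line is homeomorphic to the 2-sphere: there exists a homeomorphism between ℂP¹, the projectivization ℙ(ℂ²) of the complex vector space ℂ² (the space of one-dimensional complex subspaces, with the quotient topology), and the unit sphere S² = Metric.sphere 0 1 in EuclideanSpace ℝ (Fin 3). -/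
/-!
Sending `[z : w]` to `z / w`, and `[1 : 0]` to `∞`, identifies `ℂP¹` with the one-point
compactification of `ℂ`, which stereographic projection identifies with `S²`. The map
`ℂP¹ → OnePoint ℂ` is continuous (near `w = 0`, `z / w` is the inverse of `w / z → 0`), and it is
a bijection from a compact space, the image of the unit sphere of `ℂ²`, onto a Hausdorff space,
hence a homeomorphism.
-/

open scoped LinearAlgebra.Projectivization

/-- The quotient topology on `ℂP¹ = ℙ(ℂ²)`, induced from `ℂ² \ {0}`. -/
instance : TopologicalSpace (ℙ ℂ (Fin 2 → ℂ)) :=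
  inferInstanceAs (TopologicalSpace (Quotient (projectivizationSetoid ℂ (Fin 2 → ℂ))))

open Filter Topology Bornology

theorem Projectivization.compactSpace_quotient {𝕜 V : Type*} [RCLike 𝕜] [NormedAddCommGroup V]
    [NormedSpace 𝕜 V] [ProperSpace V] : CompactSpace (Quotient (projectivizationSetoid 𝕜 V)) := by
  let π : Metric.sphere (0 : V) 1 → Quotient (projectivizationSetoid 𝕜 V) :=
    fun v => Quotient.mk _ ⟨v.1, ne_zero_of_mem_unit_sphere v⟩
  have hπ : Continuous π := continuous_quotient_mk'.comp (continuous_subtype_val.subtype_mk _)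
  have hsurj : Function.Surjective π := by
    rintro ⟨⟨v, hv⟩⟩
    refine ⟨⟨(‖v‖⁻¹ : 𝕜) • v, by simp [norm_smul, hv]⟩, Quotient.sound ?_⟩
    exact ⟨Units.mk0 (‖v‖⁻¹ : 𝕜) (by simp [hv]), rfl⟩
  have : CompactSpace (Metric.sphere (0 : V) 1) :=
    isCompact_iff_compactSpace.1 (isCompact_sphere 0 1)
  exact hsurj.compactSpace hπ

namespace OnePoint

theorem tendsto_coe_infty_of_tendsto_cobounded {X α : Type*} [PseudoMetricSpace X] {l : Filter α}
    {f : α → X} (h : Tendsto f l (cobounded X)) : Tendsto (fun a => (f a : OnePoint X)) l (𝓝 ∞) :=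
  tendsto_coe_infty.comp
    (h.mono_right (Metric.cobounded_le_cocompact.trans cocompact_le_coclosedCompact))

variable {K : Type*} [NormedField K] [DecidableEq K]

theorem continuousAt_ite_inv_mul {x : Fin 2 → K} (hx : x ≠ 0) :
    ContinuousAt (fun v : Fin 2 → K => if v 1 = 0 then ∞ else (((v 1)⁻¹ * v 0 : K) : OnePoint K))
      x := by
  by_cases hx1 : x 1 = 0
  · have hx0 : x 0 ≠ 0 := fun hx0 => hx (funext fun i => by fin_cases i <;> assumption)
    have hslope :
        Tendsto (fun v : Fin 2 → K => (v 0)⁻¹ * v 1) (𝓝 x ⊓ 𝓟 {v | ¬v 1 = 0}) (𝓝[≠] 0) := by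
      refine tendsto_nhdsWithin_iff.2 ⟨?_, ?_⟩
      · have : ContinuousAt (fun v : Fin 2 → K => (v 0)⁻¹ * v 1) x :=
          ((continuous_apply 0).continuousAt.inv₀ hx0).mul (continuous_apply 1).continuousAt
        simpa [hx1] using this.tendsto.mono_left inf_le_left
      · have : ∀ᶠ v in 𝓝 x, v 0 ≠ 0 := (continuous_apply 0).continuousAt.eventually_ne hx0
        filter_upwards [this.filter_mono inf_le_left, mem_inf_of_right (mem_principal_self _)]
          with v hv0 hv1 using mul_ne_zero (inv_ne_zero hv0) hv1
    simp only [ContinuousAt, hx1, if_true]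
    refine tendsto_const_nhds.mono_left inf_le_left |>.if ?_
    refine tendsto_coe_infty_of_tendsto_cobounded ((tendsto_inv₀_nhdsNE_zero.comp hslope).congr ?_)
    intro v
    simp [mul_comm]
  · have : ContinuousAt (fun v : Fin 2 → K => (v 1)⁻¹ * v 0) x :=
      ((continuous_apply 1).continuousAt.inv₀ hx1).mul (continuous_apply 0).continuousAt
    refine (continuous_coe.continuousAt.comp this).congr ?_
    filter_upwards [(continuous_apply 1).continuousAt.eventually_ne hx1] with v hv
    simp [hv]

theorem continuous_equivProjectivization_symm_mk :
    Continuous fun v : {v : Fin 2 → K // v ≠ 0} =>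
      (equivProjectivization K).symm (Projectivization.mk K v.1 v.2) := by
  simp only [equivProjectivization_symm_apply_mk]
  exact continuous_iff_continuousAt.2 fun v =>
    (continuousAt_ite_inv_mul v.2).comp continuous_subtype_val.continuousAt

end OnePoint

/-- The complex projective line `ℂP¹` is homeomorphic to the unit 2-sphere. -/
theorem complexProjectiveLine_homeomorph_sphere2 :
    Nonempty ((ℙ ℂ (Fin 2 → ℂ)) ≃ₜ (Metric.sphere (0 : EuclideanSpace ℝ (Fin 3)) 1)) := by
  have : CompactSpace (ℙ ℂ (Fin 2 → ℂ)) := Projectivization.compactSpace_quotient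
  have hcont : Continuous (OnePoint.equivProjectivization ℂ).symm :=
    continuous_quot_lift _ OnePoint.continuous_equivProjectivization_symm_mk
  exact ⟨hcont.homeoOfEquivCompactToT2.trans
    (onePointEquivSphereOfFinrankEq (by simp [Complex.finrank_real_complex]))⟩
end
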